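/- arXiv:2601.19379 — 4 statements merged into one kernel-verified Lean document; each statement's English description precedes it below -/
import Mathlib

section
/- Let f : ℝ^d → ℝ be L-smooth. For every x ∈ ℝ^d, every v ∈ ℝ^d with v ≠ 0, and every η > 0, the normalized step x⁺ = x − η v/‖v‖ satisfies f(x⁺) ≤ f(x) − η‖∇f(x)‖ + 2η‖v − ∇f(x)‖ + Lη²/2. -/
/-
A step of length `η` changes an `L`-smooth `f` by at most its first-order term plus `Lη²/2`
(the descent lemma). The first-order term along `-v/‖v‖` is `-⟪∇f(x), v⟫/‖v‖`, and
`⟪∇f(x), v⟫ ≥ ‖v‖² - ‖v - ∇f(x)‖‖v‖ ≥ (‖∇f(x)‖ - 2‖v - ∇f(x)‖)‖v‖`, because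
`‖v‖ ≥ ‖∇f(x)‖ - ‖v - ∇f(x)‖`.
-/

open scoped RealInnerProductSpace

theorem le_add_fderiv_add_of_lipschitz_fderiv {E : Type*} [NormedAddCommGroup E]
    [NormedSpace ℝ E] {f : E → ℝ} {f' : E → E →L[ℝ] ℝ} {L : ℝ}
    (hf : ∀ x, HasFDerivAt f (f' x) x) (hf' : ∀ x y, ‖f' x - f' y‖ ≤ L * ‖x - y‖) (x y : E) :
    f y ≤ f x + f' x (y - x) + L / 2 * ‖y - x‖ ^ 2 := by
  set u := y - x
  -- the gap between `f` and its quadratic model along the segment is antitone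
  set φ : ℝ → ℝ := fun t => f (x + t • u) - t * f' x u - L / 2 * t ^ 2 * ‖u‖ ^ 2
  have hφ : ∀ t, HasDerivAt φ (f' (x + t • u) u - f' x u - L * t * ‖u‖ ^ 2) t := by
    intro t
    have hline : HasDerivAt (fun t : ℝ => x + t • u) u t := by
      simpa using ((hasDerivAt_id t).smul_const u).const_add x
    exact (((hf _).comp_hasDerivAt t hline).sub ((hasDerivAt_id t).mul_const (f' x u))).sub
      (((hasDerivAt_pow 2 t).const_mul (L / 2)).mul_const (‖u‖ ^ 2)) |>.congr_deriv
        (by push_cast; ring)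
  have hφ_nonpos : ∀ t ∈ Set.Ioo (0 : ℝ) 1,
      f' (x + t • u) u - f' x u - L * t * ‖u‖ ^ 2 ≤ 0 := by
    intro t ht
    have := calc f' (x + t • u) u - f' x u = (f' (x + t • u) - f' x) u := rfl
      _ ≤ ‖f' (x + t • u) - f' x‖ * ‖u‖ :=
        (Real.le_norm_self _).trans ((f' (x + t • u) - f' x).le_opNorm u)
      _ ≤ L * ‖t • u‖ * ‖u‖ := by gcongr; simpa using hf' (x + t • u) x
      _ = L * t * ‖u‖ ^ 2 := by rw [norm_smul, Real.norm_of_nonneg ht.1.le]; ring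
    linarith
  have hanti : AntitoneOn φ (Set.Icc 0 1) :=
    antitoneOn_of_hasDerivWithinAt_nonpos (convex_Icc 0 1)
      (fun t _ => (hφ t).continuousAt.continuousWithinAt)
      (fun t _ => (hφ t).hasDerivWithinAt) (by simpa using hφ_nonpos)
  have := hanti (by simp) (by simp) zero_le_one
  simp only [φ, zero_smul, add_zero, one_smul, u, add_sub_cancel] at this
  linarith

section InnerProductSpace

variable {E : Type*} [NormedAddCommGroup E] [InnerProductSpace ℝ E]

theorem le_add_inner_gradient_add_of_lipschitz_gradient [CompleteSpace E] {f : E → ℝ} {L : ℝ}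
    (hf : Differentiable ℝ f)
    (hgrad : ∀ x y, ‖gradient f x - gradient f y‖ ≤ L * ‖x - y‖) (x y : E) :
    f y ≤ f x + ⟪gradient f x, y - x⟫ + L / 2 * ‖y - x‖ ^ 2 :=
  le_add_fderiv_add_of_lipschitz_fderiv (fun x => (hf x).hasGradientAt.hasFDerivAt)
    (fun x y => by simpa only [← map_sub, LinearIsometryEquiv.norm_map] using hgrad x y) x y

theorem norm_sub_two_mul_norm_sub_mul_norm_le_inner (g v : E) :
    (‖g‖ - 2 * ‖v - g‖) * ‖v‖ ≤ ⟪g, v⟫ := by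
  have hinner : ⟪g, v⟫ = ‖v‖ ^ 2 - ⟪v - g, v⟫ := by
    rw [inner_sub_left, real_inner_self_eq_norm_sq, real_inner_comm]; ring
  have hcs : ⟪v - g, v⟫ ≤ ‖v - g‖ * ‖v‖ := real_inner_le_norm _ _
  have htri : ‖g‖ - ‖v - g‖ ≤ ‖v‖ := by
    linarith [norm_sub_norm_le g v, norm_sub_rev g v]
  nlinarith [norm_nonneg v, norm_nonneg (v - g)]

theorem mul_norm_sub_two_mul_norm_sub_le_inner_div_norm_smul {η : ℝ} (hη : 0 ≤ η) (g : E)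
    {v : E} (hv : v ≠ 0) : η * (‖g‖ - 2 * ‖v - g‖) ≤ ⟪g, (η / ‖v‖) • v⟫ := by
  have hv' : 0 < ‖v‖ := norm_pos_iff.mpr hv
  rw [real_inner_smul_right, div_mul_eq_mul_div, le_div_iff₀ hv', mul_assoc]
  exact mul_le_mul_of_nonneg_left (norm_sub_two_mul_norm_sub_mul_norm_le_inner g v) hη

end InnerProductSpace

theorem normalized_step_descent_general {d : ℕ} (L η : ℝ) (hη : 0 < η)
    (f : EuclideanSpace ℝ (Fin d) → ℝ) (hdiff : Differentiable ℝ f)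
    (hsmooth : ∀ x y, ‖gradient f x - gradient f y‖ ≤ L * ‖x - y‖)
    (x v : EuclideanSpace ℝ (Fin d)) (hv : v ≠ 0) :
    f (x - (η / ‖v‖) • v) ≤
      f x - η * ‖gradient f x‖ + 2 * η * ‖v - gradient f x‖ + L * η ^ 2 / 2 := by
  have hdescent := le_add_inner_gradient_add_of_lipschitz_gradient hdiff hsmooth x
    (x - (η / ‖v‖) • v)
  have hstep : ‖(η / ‖v‖) • v‖ = η := by
    rw [norm_smul, Real.norm_of_nonneg (div_pos hη (norm_pos_iff.mpr hv)).le,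
      div_mul_cancel₀ _ (norm_ne_zero_iff.mpr hv)]
  rw [sub_sub_cancel_left, inner_neg_right, norm_neg, hstep] at hdescent
  have hfirst := mul_norm_sub_two_mul_norm_sub_le_inner_div_norm_smul hη.le (gradient f x) hv
  linarith

/-- Descent inequality for a normalized step: if `f` is `L`-smooth
(differentiable with `L`-Lipschitz gradient), then the normalized step
`x⁺ = x − η v/‖v‖` satisfies
`f(x⁺) ≤ f(x) − η‖∇f(x)‖ + 2η‖v − ∇f(x)‖ + Lη²/2`. -/
theorem normalized_step_descent {d : ℕ} (L η : ℝ) (hL : 0 < L) (hη : 0 < η)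
    (f : EuclideanSpace ℝ (Fin d) → ℝ) (hdiff : Differentiable ℝ f)
    (hsmooth : ∀ x y, ‖gradient f x - gradient f y‖ ≤ L * ‖x - y‖)
    (x v : EuclideanSpace ℝ (Fin d)) (hv : v ≠ 0) :
    f (x - (η / ‖v‖) • v) ≤
      f x - η * ‖gradient f x‖ + 2 * η * ‖v - gradient f x‖ + L * η ^ 2 / 2 :=
  normalized_step_descent_general L η hη f hdiff hsmooth x v hv
end

section
/- Let p ∈ (1,2], β ∈ [0,1), σ ≥ 0, and let ζ_1, …, ζ_k be ℝ^d-valued random vectors adapted to a filtration (𝓕_t)_{t≥0} with 𝔼[ζ_t | 𝓕_{t−1}] = 0 and 𝔼‖ζ_t‖^p ≤ σ^p for every t = 1, …, k. Then 𝔼[‖Σ_{t=1}^k (1−β) β^{k−t} ζ_t‖^p] ≤ 2(1−β)^p σ^p / (1 − β^p). -/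
/-!
For `p ∈ [1, 2]`, concavity of `t ↦ t ^ (p / 2)` together with the parallelogram law gives the
Clarkson-type inequality `‖x + y‖ ^ p + ‖x - y‖ ^ p ≤ 2 ‖x‖ ^ p + 2 ‖y‖ ^ p`. If `S` is
`m`-measurable and `𝔼[Z | m] = 0`, then `S = 𝔼[S - Z | m]`, so conditional Jensen gives
`𝔼‖S‖ ^ p ≤ 𝔼‖S - Z‖ ^ p`; integrating the Clarkson inequality at `(S, Z)` therefore yields
`𝔼‖S + Z‖ ^ p ≤ 𝔼‖S‖ ^ p + 2 𝔼‖Z‖ ^ p`. Adding the martingale differences one at a time gives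
`𝔼‖∑ c_t ζ_t‖ ^ p ≤ 2 ∑ |c_t| ^ p 𝔼‖ζ_t‖ ^ p`, and for `c_t = (1 - β) β ^ (k - t)` the right-hand
side is at most `2 (1 - β) ^ p σ ^ p` times a geometric series in `β ^ p`.
-/

open MeasureTheory Finset

theorem norm_add_rpow_add_norm_sub_rpow_le {F : Type*} [NormedAddCommGroup F]
    [InnerProductSpace ℝ F] {p : ℝ} (hp0 : 0 ≤ p) (hp2 : p ≤ 2) (x y : F) :
    ‖x + y‖ ^ p + ‖x - y‖ ^ p ≤ 2 * ‖x‖ ^ p + 2 * ‖y‖ ^ p := by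
  have hs0 : 0 ≤ p / 2 := by positivity
  have hs1 : p / 2 ≤ 1 := by linarith
  have hsq : ∀ a : ℝ, 0 ≤ a → a ^ p = (a ^ 2) ^ (p / 2) := fun a ha => by
    rw [← Real.rpow_natCast_mul ha]
    ring_nf
  have hsq_nonneg : ∀ z : F, 0 ≤ ‖z‖ ^ 2 := fun z => by positivity
  have hmid := (Real.concaveOn_rpow hs0 hs1).2 (hsq_nonneg (x + y)) (hsq_nonneg (x - y))
    (by norm_num : (0 : ℝ) ≤ 1 / 2) (by norm_num : (0 : ℝ) ≤ 1 / 2) (by norm_num)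
  have hsub := Real.rpow_add_le_add_rpow (hsq_nonneg x) (hsq_nonneg y) hs0 hs1
  simp only [smul_eq_mul] at hmid
  have hpar : 1 / 2 * ‖x + y‖ ^ 2 + 1 / 2 * ‖x - y‖ ^ 2 = ‖x‖ ^ 2 + ‖y‖ ^ 2 := by
    linear_combination (1 / 2 : ℝ) * parallelogram_law_with_norm ℝ x y
  rw [hpar] at hmid
  simp only [hsq _ (norm_nonneg _)]
  linarith

section Martingale

variable {Ω E : Type*} [NormedAddCommGroup E] {m mΩ : MeasurableSpace Ω} {μ : Measure Ω}
  [IsFiniteMeasure μ] {p : ℝ}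

theorem MeasureTheory.MemLp.integrable_norm_rpow_ofReal {f : Ω → E} (hp : 0 ≤ p)
    (hf : MemLp f (ENNReal.ofReal p) μ) : Integrable (fun ω => ‖f ω‖ ^ p) μ := by
  simpa only [ENNReal.toReal_ofReal hp] using hf.integrable_norm_rpow'

variable [InnerProductSpace ℝ E] [CompleteSpace E]

theorem integral_norm_add_rpow_le_of_condExp_eq_zero (hm : m ≤ mΩ) (hp1 : 1 ≤ p) (hp2 : p ≤ 2)
    {S Z : Ω → E} (hS : StronglyMeasurable[m] S) (hSp : MemLp S (ENNReal.ofReal p) μ)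
    (hZp : MemLp Z (ENNReal.ofReal p) μ) (hZ : μ[Z | m] =ᵐ[μ] 0) :
    ∫ ω, ‖S ω + Z ω‖ ^ p ∂μ ≤ ∫ ω, ‖S ω‖ ^ p ∂μ + 2 * ∫ ω, ‖Z ω‖ ^ p ∂μ := by
  have hp0 : 0 ≤ p := by linarith
  have hP1 : 1 ≤ ENNReal.ofReal p := by simpa using ENNReal.ofReal_le_ofReal hp1
  have := isFiniteMeasure_trim (μ := μ) hm
  have isub : Integrable (fun ω => ‖S ω - Z ω‖ ^ p) μ :=
    (hSp.sub hZp).integrable_norm_rpow_ofReal hp0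
  have hcondExp : μ[S - Z | m] =ᵐ[μ] S := by
    filter_upwards [condExp_sub (hSp.integrable hP1) (hZp.integrable hP1) m, hZ] with ω h hω
    simp [h, hω, condExp_of_stronglyMeasurable hm hS (hSp.integrable hP1)]
  have hjensen : ∫ ω, ‖S ω‖ ^ p ∂μ ≤ ∫ ω, ‖S ω - Z ω‖ ^ p ∂μ :=
    calc ∫ ω, ‖S ω‖ ^ p ∂μ = ∫ ω, ‖μ[S - Z | m] ω‖ ^ p ∂μ :=
          integral_congr_ae (hcondExp.mono fun ω h => congrArg (‖·‖ ^ p) h.symm)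
      _ ≤ _ := integral_norm_condExp_rpow_le hp1 isub
  have hclarkson : ∫ ω, ‖S ω + Z ω‖ ^ p ∂μ + ∫ ω, ‖S ω - Z ω‖ ^ p ∂μ
      ≤ 2 * ∫ ω, ‖S ω‖ ^ p ∂μ + 2 * ∫ ω, ‖Z ω‖ ^ p ∂μ := by
    have iS := hSp.integrable_norm_rpow_ofReal hp0
    have iZ := hZp.integrable_norm_rpow_ofReal hp0
    have iadd : Integrable (fun ω => ‖S ω + Z ω‖ ^ p) μ :=
      (hSp.add hZp).integrable_norm_rpow_ofReal hp0
    rw [← integral_add iadd isub, ← integral_const_mul, ← integral_const_mul,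
      ← integral_add (iS.const_mul 2) (iZ.const_mul 2)]
    exact integral_mono (iadd.add isub) ((iS.const_mul 2).add (iZ.const_mul 2))
      fun ω => norm_add_rpow_add_norm_sub_rpow_le hp0 hp2 (S ω) (Z ω)
  linarith

theorem integral_norm_sum_smul_rpow_le {𝓕 : Filtration ℕ mΩ} (hp1 : 1 ≤ p) (hp2 : p ≤ 2)
    {ζ : ℕ → Ω → E} (hζ : StronglyAdapted 𝓕 ζ) (c : ℕ → ℝ) (n : ℕ)
    (hcond : ∀ t ∈ Icc 1 n, μ[ζ t | 𝓕 (t - 1)] =ᵐ[μ] 0)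
    (hmem : ∀ t ∈ Icc 1 n, MemLp (ζ t) (ENNReal.ofReal p) μ) :
    ∫ ω, ‖∑ t ∈ Icc 1 n, c t • ζ t ω‖ ^ p ∂μ ≤
      ∑ t ∈ Icc 1 n, 2 * |c t| ^ p * ∫ ω, ‖ζ t ω‖ ^ p ∂μ := by
  induction n with
  | zero => simp [Real.zero_rpow (by linarith : p ≠ 0)]
  | succ n ih =>
    have hinit : ∀ t ∈ Icc 1 n, t ∈ Icc 1 (n + 1) := fun t => by
      simp only [mem_Icc]; omega
    have hlast : n + 1 ∈ Icc 1 (n + 1) := by simp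
    have hS : StronglyMeasurable[𝓕 n] fun ω => ∑ t ∈ Icc 1 n, c t • ζ t ω :=
      Finset.stronglyMeasurable_fun_sum _ fun t ht =>
        ((hζ t).mono (𝓕.mono (mem_Icc.1 ht).2)).const_smul (c t)
    have hSp : MemLp (fun ω => ∑ t ∈ Icc 1 n, c t • ζ t ω) (ENNReal.ofReal p) μ :=
      memLp_finsetSum _ fun t ht => (hmem t (hinit t ht)).const_smul (c t)
    have hZ : μ[c (n + 1) • ζ (n + 1) | 𝓕 n] =ᵐ[μ] 0 := by
      have hζ0 : μ[ζ (n + 1) | 𝓕 n] =ᵐ[μ] 0 := hcond (n + 1) hlast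
      filter_upwards [condExp_smul (c (n + 1)) (ζ (n + 1)) (𝓕 n), hζ0] with ω h hω
      simp [h, hω]
    have hnorm_smul : ∫ ω, ‖c (n + 1) • ζ (n + 1) ω‖ ^ p ∂μ
        = |c (n + 1)| ^ p * ∫ ω, ‖ζ (n + 1) ω‖ ^ p ∂μ := by
      simp only [norm_smul, Real.norm_eq_abs,
        Real.mul_rpow (abs_nonneg _) (norm_nonneg _), integral_const_mul]
    simp only [sum_Icc_succ_top (Nat.le_add_left 1 n)]
    calc _ ≤ ∫ ω, ‖∑ t ∈ Icc 1 n, c t • ζ t ω‖ ^ p ∂μ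
          + 2 * ∫ ω, ‖c (n + 1) • ζ (n + 1) ω‖ ^ p ∂μ :=
          integral_norm_add_rpow_le_of_condExp_eq_zero (𝓕.le n) hp1 hp2 hS hSp
            ((hmem _ hlast).const_smul _) hZ
      _ ≤ _ := by
        rw [hnorm_smul, mul_assoc 2]
        gcongr
        exact ih (fun t ht => hcond t (hinit t ht)) fun t ht => hmem t (hinit t ht)

end Martingale

theorem sum_Icc_pow_sub_le {r : ℝ} (hr0 : 0 ≤ r) (hr1 : r < 1) (k : ℕ) :
    ∑ t ∈ Icc 1 k, r ^ (k - t) ≤ 1 / (1 - r) := by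
  have hreflect : ∑ t ∈ Icc 1 k, r ^ (k - t) = ∑ j ∈ Ico 0 k, r ^ j := by
    refine sum_nbij' (k - ·) (k - ·) ?_ ?_ ?_ ?_ ?_ <;> intro t ht <;>
      simp only [mem_Icc, mem_Ico] at ht ⊢ <;> omega
  simpa [hreflect] using geom_sum_Ico_le_of_lt_one hr0 hr1 (m := 0) (n := k)

/-- `p`-th moment bound for the exponentially weighted sum of a martingale
difference sequence with `p`-th bounded central moment:
`𝔼‖∑_{t=1}^k (1−β) β^{k−t} ζ_t‖^p ≤ 2 (1−β)^p σ^p / (1 − β^p)`. -/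
theorem weighted_mds_pth_moment_bound {d : ℕ} {Ω : Type*} {mΩ : MeasurableSpace Ω}
    (μ : Measure Ω) [IsProbabilityMeasure μ]
    (𝓕 : Filtration ℕ mΩ)
    (p β σ : ℝ) (hp1 : 1 < p) (hp2 : p ≤ 2) (hβ0 : 0 ≤ β) (hβ1 : β < 1) (hσ : 0 ≤ σ)
    (k : ℕ) (ζ : ℕ → Ω → EuclideanSpace ℝ (Fin d))
    (hadapt : ∀ t, StronglyMeasurable[𝓕 t] (ζ t))
    (hcond : ∀ t ∈ Finset.Icc 1 k, μ[ζ t | 𝓕 (t - 1)] =ᵐ[μ] 0)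
    (hint : ∀ t ∈ Finset.Icc 1 k, Integrable (fun ω => ‖ζ t ω‖ ^ p) μ)
    (hmom : ∀ t ∈ Finset.Icc 1 k, ∫ ω, ‖ζ t ω‖ ^ p ∂μ ≤ σ ^ p) :
    ∫ ω, ‖∑ t ∈ Finset.Icc 1 k, ((1 - β) * β ^ (k - t)) • ζ t ω‖ ^ p ∂μ ≤
      2 * (1 - β) ^ p * σ ^ p / (1 - β ^ p) := by
  have hp0 : 0 < p := by linarith
  have hmem : ∀ t ∈ Icc 1 k, MemLp (ζ t) (ENNReal.ofReal p) μ := fun t ht => by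
    rw [← integrable_norm_rpow_iff ((hadapt t).mono (𝓕.le t)).aestronglyMeasurable
      (by simpa using hp0) ENNReal.ofReal_ne_top, ENNReal.toReal_ofReal hp0.le]
    exact hint t ht
  have h1β : 0 ≤ 1 - β := by linarith
  have hcoef : ∀ t, |(1 - β) * β ^ (k - t)| ^ p = (1 - β) ^ p * (β ^ p) ^ (k - t) := fun t => by
    rw [abs_of_nonneg (by positivity), Real.mul_rpow h1β (by positivity),
      Real.rpow_pow_comm hβ0]
  calc _ ≤ ∑ t ∈ Icc 1 k, 2 * |(1 - β) * β ^ (k - t)| ^ p * ∫ ω, ‖ζ t ω‖ ^ p ∂μ :=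
        integral_norm_sum_smul_rpow_le hp1.le hp2 hadapt _ k hcond hmem
    _ ≤ ∑ t ∈ Icc 1 k, 2 * (1 - β) ^ p * σ ^ p * (β ^ p) ^ (k - t) := by
        refine sum_le_sum fun t ht => ?_
        rw [hcoef]
        calc 2 * ((1 - β) ^ p * (β ^ p) ^ (k - t)) * ∫ ω, ‖ζ t ω‖ ^ p ∂μ
            ≤ 2 * ((1 - β) ^ p * (β ^ p) ^ (k - t)) * σ ^ p := by gcongr; exact hmom t ht
          _ = _ := by ring
    _ = 2 * (1 - β) ^ p * σ ^ p * ∑ t ∈ Icc 1 k, (β ^ p) ^ (k - t) := by rw [mul_sum]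
    _ ≤ 2 * (1 - β) ^ p * σ ^ p * (1 / (1 - β ^ p)) := by
        gcongr
        exact sum_Icc_pow_sub_le (by positivity) (Real.rpow_lt_one hβ0 hβ1 hp0) k
    _ = _ := by rw [mul_one_div]
end

section
/- For every integer d ≥ 1, the chain function satisfies H_d(0) − inf_{x ∈ ℝ^d} H_d(x) ≤ 12d. -/
/-- `Ψ(t) = 0` for `t ≤ 1/2` and `Ψ(t) = exp(1 − 1/(2t−1)²)` for `t > 1/2`. -/
noncomputable def Psi (t : ℝ) : ℝ :=
  if t ≤ 1 / 2 then 0 else Real.exp (1 - 1 / (2 * t - 1) ^ 2)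

/-- `Φ(t) = √e ∫_{−∞}^{t} exp(−τ²/2) dτ`. -/
noncomputable def Phi (t : ℝ) : ℝ :=
  Real.sqrt (Real.exp 1) * ∫ τ in Set.Iic t, Real.exp (-τ ^ 2 / 2)

/-- The `i`-th coordinate (1-based, `1 ≤ i ≤ d`) of a vector in `ℝ^d`;
zero when out of range. -/
noncomputable def coord (d : ℕ) (y : EuclideanSpace ℝ (Fin d)) (i : ℕ) : ℝ :=
  if h : i - 1 < d then y ⟨i - 1, h⟩ else 0

/-- The chain function
`H_d(x) = −Ψ(1)Φ(x₁) + ∑_{i=2}^d (Ψ(−x_{i−1})Φ(−x_i) − Ψ(x_{i−1})Φ(x_i))`. -/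
noncomputable def Hchain (d : ℕ) (y : EuclideanSpace ℝ (Fin d)) : ℝ :=
  -Psi 1 * Phi (coord d y 1) +
    ∑ i ∈ Finset.Icc 2 d,
      (Psi (-coord d y (i - 1)) * Phi (-coord d y i) -
        Psi (coord d y (i - 1)) * Phi (coord d y i))

open Classical in
/-- The progress index `prog_a(x) = max({i ∈ {1,…,d} : |x_i| > a} ∪ {0})`. -/
noncomputable def prog (d : ℕ) (a : ℝ) (y : EuclideanSpace ℝ (Fin d)) : ℕ :=
  ((Finset.Icc 1 d).filter fun i => a < |coord d y i|).sup id

lemma Psi_nonneg (t : ℝ) : 0 ≤ Psi t := by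
  unfold Psi; split
  · exact le_rfl
  · exact (Real.exp_pos _).le

lemma Psi_le (t : ℝ) : Psi t ≤ Real.exp 1 := by
  unfold Psi; split
  · positivity
  · exact Real.exp_le_exp.2 (by nlinarith [sq_nonneg (2*t-1), one_div_nonneg.2 (sq_nonneg (2*t-1))])

lemma gauss_integrable : MeasureTheory.Integrable (fun τ : ℝ => Real.exp (-τ ^ 2 / 2)) := by
  have h := integrable_exp_neg_mul_sq (b := (1/2:ℝ)) (by norm_num)
  convert h using 2 with τ
  ring_nf

lemma Phi_nonneg (t : ℝ) : 0 ≤ Phi t := by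
  unfold Phi
  apply mul_nonneg (Real.sqrt_nonneg _)
  apply MeasureTheory.setIntegral_nonneg measurableSet_Iic
  intro τ _; positivity

lemma Phi_le (t : ℝ) : Phi t ≤ Real.sqrt (Real.exp 1) * Real.sqrt (2 * Real.pi) := by
  unfold Phi
  apply mul_le_mul_of_nonneg_left _ (Real.sqrt_nonneg _)
  have h1 : (∫ τ in Set.Iic t, Real.exp (-τ ^ 2 / 2)) ≤ ∫ τ : ℝ, Real.exp (-τ ^ 2 / 2) := by
    apply MeasureTheory.setIntegral_le_integral gauss_integrable
    filter_upwards with τ; positivity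
  have h2 : (∫ τ : ℝ, Real.exp (-τ ^ 2 / 2)) = Real.sqrt (2 * Real.pi) := by
    have := integral_gaussian (1/2 : ℝ)
    simp only [show ∀ τ : ℝ, -(1/2 : ℝ) * τ ^ 2 = -τ ^ 2 / 2 from fun τ => by ring] at this
    rw [this]; norm_num; rw [mul_comm]
  linarith

lemma prod_le (s t : ℝ) : Psi s * Phi t ≤ 12 := by
  have h1 := Psi_nonneg s
  have h2 := Psi_le s
  have h3 := Phi_nonneg t
  have h4 := Phi_le t
  have he : Real.exp 1 < 2.7182818286 := Real.exp_one_lt_d9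
  have hpi : Real.pi < 3.1416 := by linarith [Real.pi_lt_d6]
  have hpi0 : 0 < Real.pi := Real.pi_pos
  set a := Real.sqrt (Real.exp 1)
  set b := Real.sqrt (2 * Real.pi)
  have ha : a ^ 2 = Real.exp 1 := Real.sq_sqrt (Real.exp_pos 1).le
  have hb : b ^ 2 = 2 * Real.pi := Real.sq_sqrt (by positivity)
  have ha0 : 0 ≤ a := Real.sqrt_nonneg _
  have hb0 : 0 ≤ b := Real.sqrt_nonneg _
  have hab : a * b ≤ 4.2 := by nlinarith [sq_nonneg (a*b - 4.2), sq_nonneg (a - b)]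
  calc Psi s * Phi t ≤ Real.exp 1 * (a * b) := by nlinarith
    _ ≤ 12 := by nlinarith

lemma coord_zero (d i : ℕ) : coord d (0 : EuclideanSpace ℝ (Fin d)) i = 0 := by
  unfold coord; split <;> rfl

lemma Psi_zero : Psi 0 = 0 := by unfold Psi; norm_num

lemma Hchain_zero_le (d : ℕ) : Hchain d 0 ≤ 0 := by
  unfold Hchain
  rw [Finset.sum_eq_zero]
  · have := Psi_nonneg 1
    have := Phi_nonneg (coord d 0 1)
    nlinarith
  · intro i _
    simp [coord_zero, Psi_zero]

lemma Hchain_lower (d : ℕ) (hd : 1 ≤ d) (x : EuclideanSpace ℝ (Fin d)) :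
    -(12 * (d : ℝ)) ≤ Hchain d x := by
  unfold Hchain
  have hterm : ∀ i ∈ Finset.Icc 2 d, (-12 : ℝ) ≤
      Psi (-coord d x (i - 1)) * Phi (-coord d x i) -
        Psi (coord d x (i - 1)) * Phi (coord d x i) := by
    intro i _
    have h1 := prod_le (coord d x (i - 1)) (coord d x i)
    have h2 := mul_nonneg (Psi_nonneg (-coord d x (i - 1))) (Phi_nonneg (-coord d x i))
    linarith
  have hsum := Finset.card_nsmul_le_sum (Finset.Icc 2 d) _ (-12 : ℝ) hterm
  rw [Nat.card_Icc, nsmul_eq_mul] at hsum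
  have hcast : ((d + 1 - 2 : ℕ) : ℝ) = (d : ℝ) - 1 := by
    have : d + 1 - 2 = d - 1 := by omega
    rw [this, Nat.cast_sub hd, Nat.cast_one]
  rw [hcast] at hsum
  have hfirst : -Psi 1 * Phi (coord d x 1) ≥ -12 := by
    have := prod_le 1 (coord d x 1)
    linarith
  linarith

/-- `H_d(0) − inf_x H_d(x) ≤ 12d`. -/
theorem chain_initial_gap (d : ℕ) (hd : 1 ≤ d) :
    Hchain d 0 - ⨅ x : EuclideanSpace ℝ (Fin d), Hchain d x ≤ 12 * d := by
  have h0 : Hchain d 0 ≤ 0 := Hchain_zero_le d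
  have hinf : -(12 * (d : ℝ)) ≤ ⨅ x : EuclideanSpace ℝ (Fin d), Hchain d x :=
    le_ciInf (Hchain_lower d hd)
  linarith
end

section
/- Let L > 0, λ > 0, let d ≥ 1 be an integer, and define f : ℝ^d → ℝ by f(x) = (Lλ²/152) H_d(x/λ). Then for every x ∈ ℝ^d, prog_0(∇f(x)) ≤ prog_0(x) + 1; in particular, every coordinate j of ∇f(x) with j > prog_0(x) + 1 vanishes. -/
/-!
Near a point `x` with `x_{j-1} = x_j = 0` (`j ≥ 2`), the coordinate `x_j` enters `H_d` only
through the terms `Ψ(±x_{j-1}) Φ(±x_j)` and `Ψ(±x_j) Φ(±x_{j+1})`, and `Ψ` vanishes on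
`[-1/2, 1/2]`. Hence `f` is constant along `e_j` near `x`, so `∂_j f(x) = 0`, and every
`j > prog_0(x) + 1` is such a coordinate.
-/

open Filter Topology

theorem fderiv_apply_eq_zero_of_eventually_const_along {𝕜 E F : Type*} [NontriviallyNormedField 𝕜]
    [NormedAddCommGroup E] [NormedSpace 𝕜 E] [NormedAddCommGroup F] [NormedSpace 𝕜 F]
    {f : E → F} {x v : E} (h : (fun t : 𝕜 => f (x + t • v)) =ᶠ[𝓝 0] fun _ => f x) :
    fderiv 𝕜 f x v = 0 := by
  by_cases hf : DifferentiableAt 𝕜 f x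
  · rw [← hf.lineDeriv_eq_fderiv, lineDeriv, h.deriv_eq, deriv_const]
  · rw [fderiv_zero_of_not_differentiableAt hf, zero_apply]

lemma Psi_eq_zero_of_abs_le {t : ℝ} (h : |t| ≤ 1 / 2) : Psi t = 0 :=
  if_pos (le_trans (le_abs_self t) h)

lemma Psi_neg_eq_zero_of_abs_le {t : ℝ} (h : |t| ≤ 1 / 2) : Psi (-t) = 0 :=
  Psi_eq_zero_of_abs_le (by rwa [abs_neg])

section coord

variable {d : ℕ}

lemma coord_of_le {y : EuclideanSpace ℝ (Fin d)} {i : ℕ} (h : d ≤ i - 1) : coord d y i = 0 :=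
  dif_neg (not_lt.2 h)

lemma coord_succ (y : EuclideanSpace ℝ (Fin d)) (k : Fin d) : coord d y (k + 1) = y k :=
  dif_pos (by simp)

lemma coord_smul (c : ℝ) (y : EuclideanSpace ℝ (Fin d)) (i : ℕ) :
    coord d (c • y) i = c * coord d y i := by
  unfold coord
  split <;> simp

lemma coord_add_smul_single_of_ne (y : EuclideanSpace ℝ (Fin d)) (s : ℝ) {k : Fin d} {i : ℕ}
    (h : i - 1 ≠ k) : coord d (y + s • EuclideanSpace.single k 1) i = coord d y i := by
  unfold coord
  split
  · rename_i hi
    have hne : (⟨i - 1, hi⟩ : Fin d) ≠ k := fun he => h (congrArg Fin.val he)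
    simp [hne]
  · rfl

lemma coord_add_smul_single_self (y : EuclideanSpace ℝ (Fin d)) (s : ℝ) (k : Fin d) :
    coord d (y + s • EuclideanSpace.single k 1) (k + 1) = coord d y (k + 1) + s := by
  simp [coord_succ]

lemma coord_gradient (f : EuclideanSpace ℝ (Fin d) → ℝ) (x : EuclideanSpace ℝ (Fin d))
    (k : Fin d) : coord d (gradient f x) (k + 1) = fderiv ℝ f x (EuclideanSpace.single k 1) := by
  rw [coord_succ, gradient, ← InnerProductSpace.toDual_symm_apply,
    EuclideanSpace.inner_single_right]
  simp

lemma abs_coord_le_of_prog_lt {a : ℝ} (ha₀ : 0 ≤ a) {y : EuclideanSpace ℝ (Fin d)} {i : ℕ}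
    (h : prog d a y < i) : |coord d y i| ≤ a := by
  rcases le_or_gt d (i - 1) with hd | hd
  · rwa [coord_of_le hd, abs_zero]
  · by_contra! ha
    have hmem : i ∈ (Finset.Icc 1 d).filter fun i => a < |coord d y i| := by
      simp only [Finset.mem_filter, Finset.mem_Icc]
      exact ⟨⟨by omega, by omega⟩, ha⟩
    exact absurd (Finset.le_sup (f := id) hmem) (not_le.2 h)

lemma prog_le_of_abs_coord_le {a : ℝ} {y : EuclideanSpace ℝ (Fin d)} {n : ℕ}
    (h : ∀ i, n < i → |coord d y i| ≤ a) : prog d a y ≤ n :=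
  Finset.sup_le fun i hi => by
    by_contra! hn
    exact absurd (h i hn) (not_le.2 (Finset.mem_filter.1 hi).2)

end coord

lemma Hchain_add_smul_single {d : ℕ} {y : EuclideanSpace ℝ (Fin d)} {k : Fin d} (hk : 1 ≤ (k : ℕ))
    {s : ℝ} (hprev : |coord d y k| ≤ 1 / 2) (hcur : |coord d y (k + 1)| ≤ 1 / 2)
    (hshift : |coord d y (k + 1) + s| ≤ 1 / 2) :
    Hchain d (y + s • EuclideanSpace.single k 1) = Hchain d y := by
  have hoff : ∀ i : ℕ, i - 1 ≠ k → coord d (y + s • EuclideanSpace.single k 1) i = coord d y i :=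
    fun i => coord_add_smul_single_of_ne y s
  unfold Hchain
  rw [hoff 1 (by omega)]
  congr 1
  refine Finset.sum_congr rfl fun i hi => ?_
  have hi2 : 2 ≤ i := (Finset.mem_Icc.1 hi).1
  obtain rfl | rfl | hfar : i = k + 1 ∨ i = k + 2 ∨ (i - 1 ≠ k ∧ i - 1 - 1 ≠ k) := by omega
  · rw [Nat.add_sub_cancel, hoff k (by omega), Psi_eq_zero_of_abs_le hprev,
      Psi_neg_eq_zero_of_abs_le hprev]
    ring
  · rw [show (k : ℕ) + 2 - 1 = k + 1 by omega, coord_add_smul_single_self, hoff (k + 2) (by omega),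
      Psi_eq_zero_of_abs_le hcur, Psi_neg_eq_zero_of_abs_le hcur,
      Psi_eq_zero_of_abs_le hshift, Psi_neg_eq_zero_of_abs_le hshift]
  · rw [hoff i hfar.1, hoff (i - 1) hfar.2]

lemma coord_gradient_eq_zero_of_coord_eq_zero {d : ℕ} {c lam : ℝ}
    {f : EuclideanSpace ℝ (Fin d) → ℝ} (hf : ∀ x, f x = c * Hchain d (lam⁻¹ • x))
    {x : EuclideanSpace ℝ (Fin d)} {k : Fin d} (hk : 1 ≤ (k : ℕ))
    (hprev : coord d x k = 0) (hcur : coord d x (k + 1) = 0) :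
    coord d (gradient f x) (k + 1) = 0 := by
  rw [coord_gradient]
  apply fderiv_apply_eq_zero_of_eventually_const_along
  have hsmall : ∀ᶠ t in 𝓝 (0 : ℝ), |lam⁻¹ * t| < 1 / 2 := by
    have : Tendsto (fun t : ℝ => |lam⁻¹ * t|) (𝓝 0) (𝓝 0) :=
      (continuous_const.mul continuous_id).abs.tendsto' 0 0 (by simp)
    exact this.eventually (gt_mem_nhds (by norm_num))
  filter_upwards [hsmall] with t ht
  rw [hf, hf, smul_add, smul_smul,
    Hchain_add_smul_single hk (by simp [coord_smul, hprev]) (by simp [coord_smul, hcur])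
      (by simpa [coord_smul, hcur] using ht.le)]

theorem scaled_chain_zero_chain_general (L lam : ℝ)
    (d : ℕ)
    (f : EuclideanSpace ℝ (Fin d) → ℝ)
    (hf : ∀ x, f x = L * lam ^ 2 / 152 * Hchain d (lam⁻¹ • x)) :
    ∀ x : EuclideanSpace ℝ (Fin d),
      prog d 0 (gradient f x) ≤ prog d 0 x + 1 ∧
        ∀ j : ℕ, prog d 0 x + 1 < j → coord d (gradient f x) j = 0 := by
  intro x
  have hx : ∀ i, prog d 0 x < i → coord d x i = 0 := fun i hi =>
    abs_nonpos_iff.1 (abs_coord_le_of_prog_lt le_rfl hi)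
  have hgrad : ∀ j, prog d 0 x + 1 < j → coord d (gradient f x) j = 0 := by
    intro j hj
    rcases le_or_gt d (j - 1) with hd | hd
    · exact coord_of_le hd
    · obtain ⟨k, rfl⟩ : ∃ k : Fin d, j = k + 1 := ⟨⟨j - 1, hd⟩, (Nat.sub_add_cancel (by omega)).symm⟩
      exact coord_gradient_eq_zero_of_coord_eq_zero hf (by omega) (hx _ (by omega)) (hx _ (by omega))
  exact ⟨prog_le_of_abs_coord_le fun i hi => (hgrad i hi).symm ▸ abs_zero.le, hgrad⟩

/-- Zero-chain property of the scaled hard instance: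
`prog_0(∇f(x)) ≤ prog_0(x) + 1`, and every coordinate `j` of `∇f(x)` with
`j > prog_0(x) + 1` vanishes. -/
theorem scaled_chain_zero_chain (L lam : ℝ) (hL : 0 < L) (hlam : 0 < lam)
    (d : ℕ) (hd : 1 ≤ d)
    (f : EuclideanSpace ℝ (Fin d) → ℝ)
    (hf : ∀ x, f x = L * lam ^ 2 / 152 * Hchain d (lam⁻¹ • x)) :
    ∀ x : EuclideanSpace ℝ (Fin d),
      prog d 0 (gradient f x) ≤ prog d 0 x + 1 ∧
        ∀ j : ℕ, prog d 0 x + 1 < j → coord d (gradient f x) j = 0 :=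
  scaled_chain_zero_chain_general L lam d f hf
end
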